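/- For any n+1 points P₁,…,P_{n+1} in the closed unit ball of ℝⁿ, the sum Σ_{1≤k<j≤n+1} |P_k − P_j| is at most √(n(n+1)³/2), i.e. binomial(n+1,2)·√(2(n+1)/n). -/

import Mathlib

/-!
By Cauchy–Schwarz over the `m(m-1)/2` pairs `k < j` of `m` points, the square of the sum of
distances is at most `m(m-1)/2` times the sum of squared distances. Summed over all ordered pairs,
the squared distances give `2m ∑ ‖P k‖² - 2 ‖∑ P k‖² ≤ 2m²`, so the pairs `k < j` contribute at
most `m²`. With `m = n + 1` this is `(∑ ‖P k - P j‖)² ≤ n(n+1)³/2`.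
-/

open Finset

section PairSums

variable {ι : Type*} [Fintype ι] [LinearOrder ι]

theorem sum_sum_eq_sum_lt_add_sum_lt_add_sum_diag {M : Type*} [AddCommMonoid M]
    (f : ι → ι → M) (hf : ∀ i j, f i j = f j i) :
    ∑ i, ∑ j, f i j =
      ∑ i, ∑ j ∈ univ.filter (fun j => i < j), f i j +
        ∑ i, ∑ j ∈ univ.filter (fun j => i < j), f i j + ∑ i, f i i := by
  have split : ∀ i j, f i j =
      ((if i < j then f i j else 0) + if j < i then f j i else 0) + if i = j then f i i else 0 := by
    intro i j
    rcases lt_trichotomy i j with h | rfl | h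
    · simp [h, h.ne, h.not_gt]
    · simp
    · simp [h, h.ne', h.not_gt, hf i j]
  conv_lhs => enter [2, i, 2, j]; rw [split i j]
  simp only [sum_add_distrib, sum_ite_eq, mem_univ, if_true, sum_filter]
  rw [sum_comm (f := fun i j => if j < i then f j i else 0)]

theorem sum_card_filter_lt :
    (∑ i : ι, #(univ.filter (fun j => i < j)) : ℝ) = Fintype.card ι * (Fintype.card ι - 1) / 2 := by
  have h := sum_sum_eq_sum_lt_add_sum_lt_add_sum_diag (fun (_ _ : ι) => (1 : ℝ))
    fun _ _ => rfl
  simp only [sum_const, card_univ, nsmul_eq_mul, mul_one] at h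
  linarith

end PairSums

theorem sq_sum_sum_le_sum_card_mul_sum_sum_sq {ι κ : Type*} (s : Finset ι) (t : ι → Finset κ)
    (f : ι → κ → ℝ) :
    (∑ i ∈ s, ∑ j ∈ t i, f i j) ^ 2 ≤ (∑ i ∈ s, #(t i) : ℝ) * ∑ i ∈ s, ∑ j ∈ t i, f i j ^ 2 := by
  rw [sum_sigma', sum_sigma', ← Nat.cast_sum, ← card_sigma]
  exact sq_sum_le_card_mul_sum_sq

section InnerProductSpace

variable {ι E : Type*} [Fintype ι] [NormedAddCommGroup E] [InnerProductSpace ℝ E]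

theorem sum_sum_norm_sub_sq (v : ι → E) :
    ∑ i, ∑ j, ‖v i - v j‖ ^ 2 = 2 * Fintype.card ι * ∑ i, ‖v i‖ ^ 2 - 2 * ‖∑ i, v i‖ ^ 2 := by
  simp only [norm_sub_sq_real, sum_add_distrib, sum_sub_distrib, sum_const, card_univ,
    nsmul_eq_mul, ← mul_sum, ← sum_inner, ← inner_sum, real_inner_self_eq_norm_sq]
  ring

theorem sum_sum_norm_sub_sq_le {v : ι → E} {r : ℝ} (hv : ∀ i, ‖v i‖ ≤ r) :
    ∑ i, ∑ j, ‖v i - v j‖ ^ 2 ≤ 2 * (Fintype.card ι * r) ^ 2 := by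
  have hsq : ∑ i, ‖v i‖ ^ 2 ≤ Fintype.card ι * r ^ 2 := by
    refine (sum_le_sum fun i _ => pow_le_pow_left₀ (norm_nonneg (v i)) (hv i) 2).trans_eq ?_
    simp
  rw [sum_sum_norm_sub_sq]
  nlinarith [sq_nonneg ‖∑ i, v i‖, (Fintype.card ι).cast_nonneg (α := ℝ)]

end InnerProductSpace

theorem sq_sum_pairwise_norm_sub_le {ι E : Type*} [Fintype ι] [LinearOrder ι]
    [NormedAddCommGroup E] [InnerProductSpace ℝ E] {v : ι → E} {r : ℝ} (hv : ∀ i, ‖v i‖ ≤ r) :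
    (∑ i, ∑ j ∈ univ.filter (fun j => i < j), ‖v i - v j‖) ^ 2 ≤
      Fintype.card ι * (Fintype.card ι - 1) / 2 * (Fintype.card ι * r) ^ 2 := by
  have hsq :
      ∑ i, ∑ j ∈ univ.filter (fun j => i < j), ‖v i - v j‖ ^ 2 ≤ (Fintype.card ι * r) ^ 2 := by
    have h := sum_sum_eq_sum_lt_add_sum_lt_add_sum_diag (fun i j => ‖v i - v j‖ ^ 2)
      fun i j => by rw [norm_sub_rev]
    simp only [sub_self, norm_zero, zero_pow two_ne_zero, sum_const_zero, add_zero] at h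
    linarith [sum_sum_norm_sub_sq_le hv]
  calc _ ≤ (∑ i, #(univ.filter (fun j => i < j)) : ℝ) *
        ∑ i, ∑ j ∈ univ.filter (fun j => i < j), ‖v i - v j‖ ^ 2 :=
        sq_sum_sum_le_sum_card_mul_sum_sum_sq _ _ _
    _ ≤ (∑ i, #(univ.filter (fun j => i < j)) : ℝ) * (Fintype.card ι * r) ^ 2 := by gcongr
    _ = _ := by rw [sum_card_filter_lt]

theorem sum_pairwise_dist_le_general (n : ℕ)
    (P : Fin (n + 1) → EuclideanSpace ℝ (Fin n)) (hP : ∀ k, ‖P k‖ ≤ 1) :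
    ∑ k : Fin (n + 1), ∑ j ∈ Finset.univ.filter (fun j => k < j), ‖P k - P j‖ ≤
      Real.sqrt (n * (n + 1) ^ 3 / 2) := by
  apply Real.le_sqrt_of_sq_le
  calc _ ≤ _ := sq_sum_pairwise_norm_sub_le hP
    _ = n * (n + 1) ^ 3 / 2 := by simp only [Fintype.card_fin]; push_cast; ring

/-- For `n+1` points in the closed unit ball of `ℝⁿ`, the sum of pairwise distances
is at most `√(n(n+1)³/2)`. -/
theorem sum_pairwise_dist_le (n : ℕ) (hn : 1 ≤ n)
    (P : Fin (n + 1) → EuclideanSpace ℝ (Fin n)) (hP : ∀ k, ‖P k‖ ≤ 1) :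
    ∑ k : Fin (n + 1), ∑ j ∈ Finset.univ.filter (fun j => k < j), ‖P k - P j‖ ≤
      Real.sqrt (n * (n + 1) ^ 3 / 2) :=
  sum_pairwise_dist_le_general n P hP
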